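/- arXiv:1701.08284 — 2 statements merged into one kernel-verified Lean document; each statement's English description precedes it below -/
import Mathlib

section
/- Let V be a symmetric positive semidefinite d×d matrix and Ω a symmetric positive definite d×d matrix. Then G = (I + VΩ)⁻¹V is positive semidefinite and G ≤ Ω⁻¹ in the Loewner order; in particular, for any submultiplicative matrix norm compatible with the Loewner order on PSD matrices (e.g., the operator norm), ‖(I + VΩ)⁻¹V‖ ≤ ‖Ω⁻¹‖. -/
open Matrix
open scoped RealInnerProductSpace
open scoped MatrixOrder

noncomputable def matOpNorm {d : ℕ} (A : Matrix (Fin d) (Fin d) ℝ) : ℝ :=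
  ‖Matrix.toEuclideanCLM (𝕜 := ℝ) A‖

section helpers

variable {E : Type*} [NormedAddCommGroup E] [InnerProductSpace ℝ E] [CompleteSpace E]

open ContinuousLinearMap in
lemma aux_cs {f : E →L[ℝ] E} (hf : f.IsPositive) (x y : E) :
    ⟪f x, y⟫ ^ 2 ≤ ⟪f x, x⟫ * ⟪f y, y⟫ := by
  have hsymm : (f : E →ₗ[ℝ] E).IsSymmetric :=
    hf.1
  have hquad : ∀ t : ℝ, 0 ≤ ⟪f y, y⟫ * (t * t) + (2 * ⟪f x, y⟫) * t + ⟪f x, x⟫ := by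
    intro t
    have h0 : 0 ≤ ⟪f (x + t • y), x + t • y⟫ := by
      simpa using hf.inner_nonneg_left (x + t • y)
    have hyx : ⟪f y, x⟫ = ⟪f x, y⟫ :=
      calc ⟪f y, x⟫ = ⟪y, f x⟫ := hsymm y x
        _ = ⟪f x, y⟫ := real_inner_comm _ _
    calc (0:ℝ) ≤ ⟪f (x + t • y), x + t • y⟫ := h0
      _ = ⟪f y, y⟫ * (t * t) + (2 * ⟪f x, y⟫) * t + ⟪f x, x⟫ := by
          rw [map_add, f.map_smul, inner_add_left, inner_add_right, inner_add_right,
            real_inner_smul_left, real_inner_smul_left, real_inner_smul_right,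
            real_inner_smul_right, hyx]
          ring
  have := discrim_le_zero hquad
  rw [discrim] at this
  nlinarith [this]

open ContinuousLinearMap in
lemma aux_norm_le {f g : E →L[ℝ] E} (hf : f.IsPositive) (hfg : (g - f).IsPositive) :
    ‖f‖ ≤ ‖g‖ := by
  have hfx_nonneg : ∀ x, 0 ≤ ⟪f x, x⟫ := fun x => by
    simpa using hf.inner_nonneg_left x
  have hg_bound : ∀ x, ⟪f x, x⟫ ≤ ‖g‖ * ‖x‖ ^ 2 := by
    intro x
    have h1 : ⟪f x, x⟫ ≤ ⟪g x, x⟫ := by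
      have h0 : 0 ≤ ⟪(g - f) x, x⟫ := by simpa using hfg.inner_nonneg_left x
      rw [ContinuousLinearMap.sub_apply, inner_sub_left] at h0
      linarith
    calc ⟪f x, x⟫ ≤ ⟪g x, x⟫ := h1
      _ ≤ ‖g x‖ * ‖x‖ := real_inner_le_norm _ _
      _ ≤ (‖g‖ * ‖x‖) * ‖x‖ := by
          have := g.le_opNorm x
          have hx : (0:ℝ) ≤ ‖x‖ := norm_nonneg _
          nlinarith [norm_nonneg (g x)]
      _ = ‖g‖ * ‖x‖ ^ 2 := by ring
  have key : ∀ x, ‖f x‖ ^ 2 ≤ ‖g‖ * ‖f‖ * ‖x‖ ^ 2 := by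
    intro x
    by_cases hfx : f x = 0
    · have : (0:ℝ) ≤ ‖g‖ * ‖f‖ * ‖x‖ ^ 2 := by positivity
      simpa [hfx] using this
    · have h2 : ⟪f x, f x⟫ ^ 2 ≤ ⟪f x, x⟫ * ⟪f (f x), f x⟫ := aux_cs hf x (f x)
      have h3 : ⟪f (f x), f x⟫ ≤ ‖f‖ * ‖f x‖ ^ 2 := by
        calc ⟪f (f x), f x⟫ ≤ ‖f (f x)‖ * ‖f x‖ := real_inner_le_norm _ _
          _ ≤ (‖f‖ * ‖f x‖) * ‖f x‖ := by
              have := f.le_opNorm (f x)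
              nlinarith [norm_nonneg (f x)]
          _ = ‖f‖ * ‖f x‖ ^ 2 := by ring
      have h4 : ⟪f x, f x⟫ = ‖f x‖ ^ 2 := real_inner_self_eq_norm_sq _
      have h5 : (0:ℝ) < ‖f x‖ := norm_pos_iff.mpr hfx
      have h6 : ⟪f x, x⟫ * ⟪f (f x), f x⟫ ≤ (‖g‖ * ‖x‖ ^ 2) * (‖f‖ * ‖f x‖ ^ 2) := by
        have hfxfx : 0 ≤ ⟪f (f x), f x⟫ := hfx_nonneg (f x)
        have := hg_bound x
        have := hfx_nonneg x
        nlinarith [norm_nonneg x, norm_nonneg g, opNorm_nonneg g]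
      rw [h4] at h2
      have h7 : (0:ℝ) < ‖f x‖ ^ 2 := by positivity
      nlinarith [h2.trans h6, h7]
  have hfg_nonneg : (0:ℝ) ≤ ‖g‖ * ‖f‖ := by positivity
  have hnorm : ‖f‖ ≤ Real.sqrt (‖g‖ * ‖f‖) := by
    apply f.opNorm_le_bound (Real.sqrt_nonneg _)
    intro x
    have := key x
    have h7 : ‖f x‖ = Real.sqrt (‖f x‖ ^ 2) := (Real.sqrt_sq (norm_nonneg _)).symm
    rw [h7]
    calc Real.sqrt (‖f x‖ ^ 2) ≤ Real.sqrt (‖g‖ * ‖f‖ * ‖x‖ ^ 2) := Real.sqrt_le_sqrt this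
      _ = Real.sqrt (‖g‖ * ‖f‖) * ‖x‖ := by
          rw [Real.sqrt_mul hfg_nonneg, Real.sqrt_sq (norm_nonneg _)]
  have hsq : ‖f‖ ^ 2 ≤ ‖g‖ * ‖f‖ := by
    have := Real.sqrt_le_sqrt (le_of_eq (rfl : ‖g‖ * ‖f‖ = ‖g‖ * ‖f‖))
    nlinarith [hnorm, Real.sq_sqrt hfg_nonneg, Real.sqrt_nonneg (‖g‖ * ‖f‖), norm_nonneg f]
  rcases eq_or_lt_of_le (norm_nonneg f) with h | h
  · rw [← h]; exact norm_nonneg g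
  · nlinarith [hsq, h]

lemma aux_isPositive {d : ℕ} {M : Matrix (Fin d) (Fin d) ℝ} (hM : M.PosSemidef) :
    (Matrix.toEuclideanCLM (𝕜 := ℝ) M).IsPositive := by
  constructor
  · rw [← ContinuousLinearMap.isSelfAdjoint_iff_isSymmetric, _root_.IsSelfAdjoint, ← map_star]
    congr 1
    exact hM.isHermitian
  · intro x
    rw [ContinuousLinearMap.reApplyInnerSelf]
    set y : Fin d → ℝ := (WithLp.equiv 2 _) x with hy
    have hx : x = (WithLp.equiv 2 (Fin d → ℝ)).symm y := by simp [hy]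
    rw [hx, WithLp.equiv_symm_apply, Matrix.toEuclideanCLM_toLp]
    have hinner : (inner ℝ ((WithLp.equiv 2 (Fin d → ℝ)).symm (M *ᵥ y))
        ((WithLp.equiv 2 (Fin d → ℝ)).symm y) : ℝ) = (M *ᵥ y) ⬝ᵥ y := by
      simp [PiLp.inner_apply, dotProduct, mul_comm]
    have h2 := hM.dotProduct_mulVec_nonneg y
    simp only [star_trivial] at h2
    rw [← WithLp.equiv_symm_apply, hinner, dotProduct_comm]
    simpa using h2

end helpers

/-- For `V` PSD and `Ω` PD, `G = (1 + V * Ω)⁻¹ * V` is PSD, `G ≤ Ω⁻¹` in the Loewner order,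
and `‖G‖ ≤ ‖Ω⁻¹‖` in operator norm. -/
theorem stmt_1 (d : ℕ) (V Ω : Matrix (Fin d) (Fin d) ℝ)
    (hV : V.PosSemidef) (hΩ : Ω.PosDef) :
    ((1 + V * Ω)⁻¹ * V).PosSemidef ∧
      (Ω⁻¹ - (1 + V * Ω)⁻¹ * V).PosSemidef ∧
      matOpNorm ((1 + V * Ω)⁻¹ * V) ≤ matOpNorm Ω⁻¹ := by
  classical
  set S := CFC.sqrt Ω with hSdef
  have hS : S * S = Ω := CFC.sqrt_mul_sqrt_self Ω hΩ.posSemidef.nonneg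
  have hSpsd : S.PosSemidef := (CFC.sqrt_nonneg Ω).posSemidef
  have hSherm : Sᴴ = S := hSpsd.isHermitian
  have hSdet : IsUnit S.det := by
    have hΩdet : (0:ℝ) < Ω.det := hΩ.det_pos
    rw [← hS, det_mul] at hΩdet
    have : S.det ≠ 0 := by intro h; rw [h] at hΩdet; simp at hΩdet
    exact isUnit_iff_ne_zero.mpr this
  have hSS : S⁻¹ * S = 1 := nonsing_inv_mul S hSdet
  have hSS' : S * S⁻¹ = 1 := mul_nonsing_inv S hSdet
  have hSinvherm : (S⁻¹)ᴴ = S⁻¹ := (Matrix.IsHermitian.inv hSpsd.isHermitian)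
  set W := S * V * S with hWdef
  have hW : W.PosSemidef := by
    have := hV.mul_mul_conjTranspose_same S
    rwa [hSherm] at this
  have hIW : (1 + W).PosDef := Matrix.PosDef.add_posSemidef Matrix.PosDef.one hW
  have hIWdet : IsUnit (1 + W).det := isUnit_iff_ne_zero.mpr (ne_of_gt hIW.det_pos)
  have hIWinv : (1 + W) * (1 + W)⁻¹ = 1 := mul_nonsing_inv _ hIWdet
  have hIWinv' : (1 + W)⁻¹ * (1 + W) = 1 := nonsing_inv_mul _ hIWdet
  have hIWherm : ((1 + W)⁻¹)ᴴ = (1 + W)⁻¹ := Matrix.IsHermitian.inv hIW.isHermitian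
  -- key identity
  have hkey : 1 + V * Ω = S⁻¹ * ((1 + W) * S) := by
    have expand : (1 + W) * S = S * (1 + V * Ω) := by
      rw [hWdef, ← hS]
      noncomm_ring
    rw [expand, ← Matrix.mul_assoc, hSS, Matrix.one_mul]
  have hGinv : (1 + V * Ω)⁻¹ = S⁻¹ * (1 + W)⁻¹ * S := by
    rw [hkey, Matrix.mul_inv_rev, Matrix.mul_inv_rev,
      Matrix.nonsing_inv_nonsing_inv S hSdet, Matrix.mul_assoc]
  have hG : (1 + V * Ω)⁻¹ * V = S⁻¹ * ((1 + W)⁻¹ * W) * S⁻¹ := by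
    rw [hGinv]
    have hSV : S * V = W * S⁻¹ := by
      rw [hWdef, Matrix.mul_assoc, hSS', Matrix.mul_one]
    calc S⁻¹ * (1 + W)⁻¹ * S * V = S⁻¹ * (1 + W)⁻¹ * (S * V) := by
          rw [Matrix.mul_assoc]
      _ = S⁻¹ * (1 + W)⁻¹ * (W * S⁻¹) := by rw [hSV]
      _ = S⁻¹ * ((1 + W)⁻¹ * W) * S⁻¹ := by
          simp only [Matrix.mul_assoc]
  -- G is PSD
  have hM : (1 + W)⁻¹ * W = (1 + W)⁻¹ * (W + W * W) * (1 + W)⁻¹ := by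
    have : W + W * W = W * (1 + W) := by rw [Matrix.mul_add, Matrix.mul_one]
    rw [this, Matrix.mul_assoc, Matrix.mul_assoc, hIWinv, Matrix.mul_one]
  have hWW : (W + W * W).PosSemidef := by
    have h1 : (W * W).PosSemidef := by
      have := Matrix.posSemidef_conjTranspose_mul_self W
      rwa [hW.isHermitian] at this
    exact hW.add h1
  have hGpsd : ((1 + V * Ω)⁻¹ * V).PosSemidef := by
    rw [hG, hM]
    have := hWW.mul_mul_conjTranspose_same (S⁻¹ * (1 + W)⁻¹)
    rw [conjTranspose_mul, hSinvherm, hIWherm] at this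
    convert this using 1
    simp only [Matrix.mul_assoc]
  -- Ω⁻¹ - G is PSD
  have hΩinv : Ω⁻¹ = S⁻¹ * S⁻¹ := by rw [← hS, Matrix.mul_inv_rev]
  have hdiff : Ω⁻¹ - (1 + V * Ω)⁻¹ * V = S⁻¹ * (1 + W)⁻¹ * S⁻¹ := by
    rw [hΩinv, hG]
    have h1 : (1:Matrix (Fin d) (Fin d) ℝ) - (1 + W)⁻¹ * W = (1 + W)⁻¹ := by
      have : (1 + W)⁻¹ * (1 + W) - (1 + W)⁻¹ * W = (1 + W)⁻¹ := by
        rw [Matrix.mul_add, Matrix.mul_one, add_sub_cancel_right]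
      rwa [hIWinv'] at this
    calc S⁻¹ * S⁻¹ - S⁻¹ * ((1 + W)⁻¹ * W) * S⁻¹
        = S⁻¹ * (1 - (1 + W)⁻¹ * W) * S⁻¹ := by
          noncomm_ring
      _ = S⁻¹ * (1 + W)⁻¹ * S⁻¹ := by rw [h1]
  have hdiffpsd : (Ω⁻¹ - (1 + V * Ω)⁻¹ * V).PosSemidef := by
    rw [hdiff]
    have := (hIW.inv.posSemidef).mul_mul_conjTranspose_same S⁻¹
    rwa [hSinvherm] at this
  refine ⟨hGpsd, hdiffpsd, ?_⟩
  -- norm inequality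
  unfold matOpNorm
  apply aux_norm_le (aux_isPositive hGpsd)
  have : toEuclideanCLM (𝕜 := ℝ) Ω⁻¹ - toEuclideanCLM (𝕜 := ℝ) ((1 + V * Ω)⁻¹ * V)
      = toEuclideanCLM (𝕜 := ℝ) (Ω⁻¹ - (1 + V * Ω)⁻¹ * V) := by
    rw [map_sub]
  rw [this]
  exact aux_isPositive hdiffpsd
end

section
/- Let U ∈ ℝ^d, let V be a symmetric positive definite d×d matrix, let Ω be symmetric positive definite, and let μ ∈ ℝ^d. Then the Gaussian integral ∫_{ℝ^d} exp((μ+φ)ᵀU − ½(μ+φ)ᵀV(μ+φ)) · (2π)^{−d/2} det(Ω)^{−1/2} exp(−½ φᵀΩ⁻¹φ) dφ equals det(I + VΩ)^{−1/2} · exp(−½ (μ − V⁻¹U)ᵀ G (μ − V⁻¹U)) · exp(½ UᵀV⁻¹U), where G = (I + VΩ)⁻¹V. -/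
open MeasureTheory Matrix Real

private lemma gauss_diag' (d : ℕ) (c : Fin d → ℝ) :
    ∫ y : Fin d → ℝ, rexp (∑ i, c i * y i - (1/2) * ∑ i, (y i)^2)
      = (2*π) ^ ((d:ℝ)/2) * rexp ((1/2) * ∑ i, (c i)^2) := by
  have h := GaussianFourier.integral_cexp_neg_sum_mul_add
    (b := fun _ : Fin d => (1/2 : ℂ)) (by intro i; norm_num) (fun i => (c i : ℂ))
  have cast_eq : (∫ y : Fin d → ℝ,
        ((rexp (∑ i, c i * y i - (1/2) * ∑ i, (y i)^2) : ℝ) : ℂ))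
      = ((∫ y : Fin d → ℝ, rexp (∑ i, c i * y i - (1/2) * ∑ i, (y i)^2) : ℝ) : ℂ) :=
    integral_ofReal
  have hL : ∫ v : Fin d → ℝ,
      Complex.exp (-∑ i, (1/2 : ℂ) * (v i : ℂ) ^ 2 + ∑ i, (c i : ℂ) * (v i : ℂ))
      = ((∫ y : Fin d → ℝ, rexp (∑ i, c i * y i - (1/2) * ∑ i, (y i)^2) : ℝ) : ℂ) := by
    rw [← cast_eq]
    congr 1 with v
    rw [Complex.ofReal_exp]
    congr 1
    push_cast
    rw [← Finset.mul_sum]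
    ring
  rw [hL] at h
  have hR : (∏ i : Fin d, ((π : ℂ) / (1/2 : ℂ)) ^ (1/2 : ℂ) *
      Complex.exp ((c i : ℂ) ^ 2 / (4 * (1/2 : ℂ))))
      = (((2*π) ^ ((d:ℝ)/2) * rexp ((1/2) * ∑ i, (c i)^2) : ℝ) : ℂ) := by
    have h2 : ((π : ℂ) / (1/2 : ℂ)) = ((2 * π : ℝ) : ℂ) := by push_cast; ring
    have h3 : (1/2 : ℂ) = ((1/2 : ℝ) : ℂ) := by norm_num
    simp_rw [h2, h3, Finset.prod_mul_distrib, Finset.prod_const, ← Complex.exp_sum]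
    rw [← Complex.ofReal_cpow (by positivity)]
    norm_cast
    rw [Finset.card_univ, Fintype.card_fin,
      ← Real.rpow_natCast ((2*π) ^ (1/2:ℝ)) d, ← Real.rpow_mul (by positivity)]
    congr 1
    · congr 1
      ring
    · congr 1
      rw [Finset.mul_sum]
      congr 1 with i
      ring
  rw [hR] at h
  exact_mod_cast h

private lemma dp_mulVec_left' {d : ℕ} (M : Matrix (Fin d) (Fin d) ℝ) (x y : Fin d → ℝ) :
    (M *ᵥ x) ⬝ᵥ y = x ⬝ᵥ (Mᵀ *ᵥ y) := by
  rw [dotProduct_comm, Matrix.dotProduct_mulVec, dotProduct_comm,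
    ← Matrix.mulVec_transpose]

open scoped MatrixOrder in
private lemma gauss_quad' (d : ℕ) (A : Matrix (Fin d) (Fin d) ℝ) (hA : A.PosDef) (b : Fin d → ℝ) :
    ∫ x : Fin d → ℝ, rexp (b ⬝ᵥ x - (1/2) * (x ⬝ᵥ A *ᵥ x))
      = (2*π) ^ ((d:ℝ)/2) * A.det ^ (-(1:ℝ)/2) * rexp ((1/2) * (b ⬝ᵥ A⁻¹ *ᵥ b)) := by
  set S := CFC.sqrt A with hSdef
  have hSS : S * S = A := CFC.sqrt_mul_sqrt_self A hA.posSemidef.nonneg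
  have hSsym : Sᵀ = S := by
    have := (CFC.sqrt_nonneg A).posSemidef.1; simpa [Matrix.IsHermitian] using this
  have hdetA : 0 < A.det := hA.det_pos
  have hdS2 : S.det * S.det = A.det := by rw [← Matrix.det_mul, hSS]
  have hdSne : S.det ≠ 0 := by
    intro h; rw [h, zero_mul] at hdS2; exact hdetA.ne' hdS2.symm
  have hUnit : IsUnit S.det := isUnit_iff_ne_zero.2 hdSne
  haveI : Invertible S := S.invertibleOfIsUnitDet hUnit
  have hinv_symm : (S⁻¹)ᵀ = S⁻¹ := by rw [Matrix.transpose_nonsing_inv, hSsym]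
  have hIS : S⁻¹ * S = 1 := S.nonsing_inv_mul hUnit
  have hSI : S * S⁻¹ = 1 := S.mul_nonsing_inv hUnit
  have hAinv : A⁻¹ = S⁻¹ * S⁻¹ := by rw [← hSS, Matrix.mul_inv_rev]
  have hASi : S⁻¹ * (A * S⁻¹) = 1 := by
    rw [← hSS, Matrix.mul_assoc S S S⁻¹, hSI, Matrix.mul_one, hIS]
  -- change of variables
  let e : (Fin d → ℝ) ≃ₗ[ℝ] (Fin d → ℝ) := S.toLinearEquiv' ‹_›
  let eL : (Fin d → ℝ) ≃L[ℝ] (Fin d → ℝ) := e.toContinuousLinearEquiv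
  let em : (Fin d → ℝ) ≃ᵐ (Fin d → ℝ) := eL.toHomeomorph.toMeasurableEquiv
  have hem : ∀ x, em x = S *ᵥ x := fun x => rfl
  have hmap : Measure.map (⇑em) (volume : Measure (Fin d → ℝ))
      = ENNReal.ofReal |S.det⁻¹| • volume := by
    have hcoe : ⇑em = ⇑(Matrix.toLin' S) := rfl
    rw [hcoe]
    have := Measure.map_linearMap_addHaar_eq_smul_addHaar (volume : Measure (Fin d → ℝ))
      (f := Matrix.toLin' S) (by rw [LinearMap.det_toLin']; exact hdSne)
    rwa [LinearMap.det_toLin'] at this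
  have hG : ∀ y : Fin d → ℝ,
      rexp (b ⬝ᵥ (S⁻¹ *ᵥ y) - (1/2) * ((S⁻¹ *ᵥ y) ⬝ᵥ A *ᵥ (S⁻¹ *ᵥ y)))
      = rexp (∑ i, (S⁻¹ *ᵥ b) i * y i - (1/2) * ∑ i, (y i)^2) := by
    intro y
    have h1 : b ⬝ᵥ (S⁻¹ *ᵥ y) = ∑ i, (S⁻¹ *ᵥ b) i * y i := by
      rw [← hinv_symm, ← dp_mulVec_left', hinv_symm]
      simp [dotProduct]
    have h2 : (S⁻¹ *ᵥ y) ⬝ᵥ A *ᵥ (S⁻¹ *ᵥ y) = ∑ i, (y i)^2 := by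
      rw [Matrix.mulVec_mulVec, dp_mulVec_left', hinv_symm, Matrix.mulVec_mulVec, hASi,
        Matrix.one_mulVec]
      simp [dotProduct, sq]
    rw [h1, h2]
  have hsum : ∑ i, ((S⁻¹ *ᵥ b) i)^2 = b ⬝ᵥ A⁻¹ *ᵥ b := by
    have : ∑ i, ((S⁻¹ *ᵥ b) i)^2 = (S⁻¹ *ᵥ b) ⬝ᵥ (S⁻¹ *ᵥ b) := by
      simp [dotProduct, sq]
    rw [this, dp_mulVec_left', hinv_symm, Matrix.mulVec_mulVec, ← hAinv]
  have habs : |S.det⁻¹| = A.det ^ (-(1:ℝ)/2) := by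
    rw [neg_div, Real.rpow_neg hdetA.le, ← Real.sqrt_eq_rpow, ← hdS2,
      Real.sqrt_mul_self_eq_abs, abs_inv]
  calc ∫ x : Fin d → ℝ, rexp (b ⬝ᵥ x - (1/2) * (x ⬝ᵥ A *ᵥ x))
      = ∫ x, rexp (b ⬝ᵥ (S⁻¹ *ᵥ (em x)) - (1/2) * ((S⁻¹ *ᵥ (em x)) ⬝ᵥ A *ᵥ (S⁻¹ *ᵥ (em x)))) := by
        congr 1 with x
        rw [hem]
        simp only [Matrix.mulVec_mulVec, hIS, Matrix.one_mulVec]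
    _ = ∫ y, rexp (b ⬝ᵥ (S⁻¹ *ᵥ y) - (1/2) * ((S⁻¹ *ᵥ y) ⬝ᵥ A *ᵥ (S⁻¹ *ᵥ y)))
          ∂(Measure.map (⇑em) volume) :=
        by exact (MeasureTheory.integral_map_equiv em (fun y => rexp (b ⬝ᵥ (S⁻¹ *ᵥ y) -
          (1/2) * ((S⁻¹ *ᵥ y) ⬝ᵥ A *ᵥ (S⁻¹ *ᵥ y))))).symm
    _ = |S.det⁻¹| * ∫ y, rexp (b ⬝ᵥ (S⁻¹ *ᵥ y) - (1/2) * ((S⁻¹ *ᵥ y) ⬝ᵥ A *ᵥ (S⁻¹ *ᵥ y))) := by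
        rw [hmap, integral_smul_measure, ENNReal.toReal_ofReal (abs_nonneg _), smul_eq_mul]
    _ = (2*π) ^ ((d:ℝ)/2) * A.det ^ (-(1:ℝ)/2) * rexp ((1/2) * (b ⬝ᵥ A⁻¹ *ᵥ b)) := by
        simp_rw [hG]
        rw [gauss_diag', hsum, habs]
        ring

/-- The explicit Gaussian integral computing the unconditional likelihood: for `U, μ ∈ ℝ^d` and
symmetric positive definite `V, Ω`,
`∫ exp((μ+φ)ᵀU − ½(μ+φ)ᵀV(μ+φ)) (2π)^{−d/2} det(Ω)^{−1/2} exp(−½φᵀΩ⁻¹φ) dφ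
  = det(1+VΩ)^{−1/2} exp(−½(μ−V⁻¹U)ᵀG(μ−V⁻¹U)) exp(½UᵀV⁻¹U)` with `G = (1+VΩ)⁻¹V`. -/
theorem stmt_3 (d : ℕ) (U μ : Fin d → ℝ) (V Ω : Matrix (Fin d) (Fin d) ℝ)
    (hV : V.PosDef) (hΩ : Ω.PosDef) :
    (∫ φ : Fin d → ℝ,
        Real.exp ((μ + φ) ⬝ᵥ U - (1 / 2) * ((μ + φ) ⬝ᵥ V.mulVec (μ + φ))) *
          ((2 * π) ^ (-(d : ℝ) / 2) * Ω.det ^ (-(1 : ℝ) / 2) *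
            Real.exp (-(1 / 2) * (φ ⬝ᵥ Ω⁻¹.mulVec φ))) ∂volume) =
      (1 + V * Ω).det ^ (-(1 : ℝ) / 2) *
        Real.exp (-(1 / 2) *
          ((μ - V⁻¹.mulVec U) ⬝ᵥ ((1 + V * Ω)⁻¹ * V).mulVec (μ - V⁻¹.mulVec U))) *
        Real.exp ((1 / 2) * (U ⬝ᵥ V⁻¹.mulVec U)) := by
  have hVsym : Vᵀ = V := by
    have := hV.1; simpa [Matrix.IsHermitian] using this
  have hVdet : IsUnit V.det := isUnit_iff_ne_zero.2 hV.det_pos.ne'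
  have hΩdet : IsUnit Ω.det := isUnit_iff_ne_zero.2 hΩ.det_pos.ne'
  have hVI : V * V⁻¹ = 1 := V.mul_nonsing_inv hVdet
  have hΩI : Ω * Ω⁻¹ = 1 := Ω.mul_nonsing_inv hΩdet
  have hIΩ : Ω⁻¹ * Ω = 1 := Ω.nonsing_inv_mul hΩdet
  obtain ⟨A, hAdef⟩ : ∃ A : Matrix (Fin d) (Fin d) ℝ, A = V + Ω⁻¹ := ⟨_, rfl⟩
  have hA : A.PosDef := hAdef ▸ hV.add hΩ.inv
  have hAdet : IsUnit A.det := isUnit_iff_ne_zero.2 hA.det_pos.ne'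
  have hAI : A * A⁻¹ = 1 := A.mul_nonsing_inv hAdet
  have hsymV : ∀ x y : Fin d → ℝ, x ⬝ᵥ V *ᵥ y = y ⬝ᵥ V *ᵥ x := by
    intro x y
    rw [dotProduct_comm, dp_mulVec_left', hVsym]
  -- matrix identities
  have h1 : 1 + V * Ω = A * Ω := by
    rw [hAdef, add_mul, hIΩ, add_comm]
  have hBinv : (1 + V * Ω)⁻¹ = Ω⁻¹ * A⁻¹ := by
    rw [h1, Matrix.mul_inv_rev]
  have key : V * A⁻¹ * V + Ω⁻¹ * A⁻¹ * V = V := by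
    rw [show V * A⁻¹ * V + Ω⁻¹ * A⁻¹ * V = (V + Ω⁻¹) * A⁻¹ * V by noncomm_ring,
      ← hAdef, hAI, one_mul]
  have hGmat : (1 + V * Ω)⁻¹ * V = V - V * A⁻¹ * V := by
    rw [hBinv, eq_sub_iff_add_eq, add_comm]; exact key
  -- vectors
  obtain ⟨w, hwdef⟩ : ∃ w : Fin d → ℝ, w = V⁻¹ *ᵥ U := ⟨_, rfl⟩
  obtain ⟨m, hmdef⟩ : ∃ m : Fin d → ℝ, m = μ - w := ⟨_, rfl⟩
  have hVw : V *ᵥ w = U := by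
    rw [hwdef, Matrix.mulVec_mulVec, hVI, Matrix.one_mulVec]
  obtain ⟨b, hbdef⟩ : ∃ b : Fin d → ℝ, b = U - V *ᵥ μ := ⟨_, rfl⟩
  have hb : b = -(V *ᵥ m) := by
    rw [hbdef, hmdef, Matrix.mulVec_sub, hVw, neg_sub]
  obtain ⟨c0, hc0def⟩ : ∃ c0 : ℝ, c0 = μ ⬝ᵥ U - (1/2) * (μ ⬝ᵥ V *ᵥ μ) := ⟨_, rfl⟩
  -- step 1 : rewrite the integrand
  have hpt : ∀ φ : Fin d → ℝ,
      Real.exp ((μ + φ) ⬝ᵥ U - (1 / 2) * ((μ + φ) ⬝ᵥ V.mulVec (μ + φ))) *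
          ((2 * π) ^ (-(d : ℝ) / 2) * Ω.det ^ (-(1 : ℝ) / 2) *
            Real.exp (-(1 / 2) * (φ ⬝ᵥ Ω⁻¹.mulVec φ)))
      = ((2 * π) ^ (-(d : ℝ) / 2) * Ω.det ^ (-(1 : ℝ) / 2) * rexp c0) *
          rexp (b ⬝ᵥ φ - (1/2) * (φ ⬝ᵥ A *ᵥ φ)) := by
    intro φ
    have hXY : ((μ + φ) ⬝ᵥ U - (1 / 2) * ((μ + φ) ⬝ᵥ V.mulVec (μ + φ)))
        + (-(1 / 2) * (φ ⬝ᵥ Ω⁻¹.mulVec φ))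
        = c0 + (b ⬝ᵥ φ - (1/2) * (φ ⬝ᵥ A *ᵥ φ)) := by
      rw [hc0def, hbdef, hAdef]
      simp only [add_dotProduct, dotProduct_add, Matrix.mulVec_add,
        Matrix.add_mulVec, sub_dotProduct, Matrix.mulVec_sub, dotProduct_sub]
      have e1 : μ ⬝ᵥ V *ᵥ φ = φ ⬝ᵥ V *ᵥ μ := hsymV μ φ
      have e2 : U ⬝ᵥ φ = φ ⬝ᵥ U := dotProduct_comm U φ
      have e3 : (V *ᵥ μ) ⬝ᵥ φ = φ ⬝ᵥ V *ᵥ μ := dotProduct_comm _ φ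
      linarith [e1, e2, e3]
    calc Real.exp ((μ + φ) ⬝ᵥ U - (1 / 2) * ((μ + φ) ⬝ᵥ V.mulVec (μ + φ))) *
          ((2 * π) ^ (-(d : ℝ) / 2) * Ω.det ^ (-(1 : ℝ) / 2) *
            Real.exp (-(1 / 2) * (φ ⬝ᵥ Ω⁻¹.mulVec φ)))
        = (2 * π) ^ (-(d : ℝ) / 2) * Ω.det ^ (-(1 : ℝ) / 2) *
            rexp (((μ + φ) ⬝ᵥ U - (1 / 2) * ((μ + φ) ⬝ᵥ V.mulVec (μ + φ)))
              + (-(1 / 2) * (φ ⬝ᵥ Ω⁻¹.mulVec φ))) := by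
          rw [Real.exp_add]; ring
      _ = ((2 * π) ^ (-(d : ℝ) / 2) * Ω.det ^ (-(1 : ℝ) / 2) * rexp c0) *
            rexp (b ⬝ᵥ φ - (1/2) * (φ ⬝ᵥ A *ᵥ φ)) := by
          rw [hXY, Real.exp_add]; ring
  rw [MeasureTheory.integral_congr_ae (Filter.Eventually.of_forall hpt),
    MeasureTheory.integral_const_mul, gauss_quad' d A hA b]
  -- final algebra
  have hdet : Ω.det ^ (-(1:ℝ)/2) * A.det ^ (-(1:ℝ)/2) = (1 + V * Ω).det ^ (-(1:ℝ)/2) := by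
    rw [← Real.mul_rpow hΩ.det_pos.le hA.det_pos.le, ← Matrix.det_mul,
      show Ω * A = 1 + Ω * V by rw [hAdef, mul_add, hΩI, add_comm],
      show (1 + Ω * V).det = (1 + V * Ω).det from Matrix.det_one_add_mul_comm Ω V]
  have hexp : c0 + (1/2) * (b ⬝ᵥ A⁻¹ *ᵥ b)
      = -(1/2) * (m ⬝ᵥ ((1 + V * Ω)⁻¹ * V) *ᵥ m) + (1/2) * (U ⬝ᵥ V⁻¹ *ᵥ U) := by
    have hbb : b ⬝ᵥ A⁻¹ *ᵥ b = m ⬝ᵥ (V * A⁻¹ * V) *ᵥ m := by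
      rw [hb, neg_dotProduct, Matrix.mulVec_neg, dotProduct_neg, neg_neg,
        Matrix.mulVec_mulVec, dp_mulVec_left', hVsym, Matrix.mulVec_mulVec,
        ← Matrix.mul_assoc]
    have hc0 : c0 = (1/2) * (U ⬝ᵥ V⁻¹ *ᵥ U) - (1/2) * (m ⬝ᵥ V *ᵥ m) := by
      have hμ : μ = m + w := by rw [hmdef]; abel
      rw [hc0def, hμ]
      simp only [add_dotProduct, dotProduct_add, Matrix.mulVec_add]
      have e1 : w ⬝ᵥ V *ᵥ m = m ⬝ᵥ V *ᵥ w := hsymV w m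
      have e2 : w ⬝ᵥ U = U ⬝ᵥ V⁻¹ *ᵥ U := by rw [hwdef, dotProduct_comm]
      have e3 : m ⬝ᵥ V *ᵥ w = m ⬝ᵥ U := by rw [hVw]
      have e4 : w ⬝ᵥ V *ᵥ w = U ⬝ᵥ V⁻¹ *ᵥ U := by
        rw [hVw, hwdef, dotProduct_comm]
      linarith [e1, e2, e3, e4]
    rw [hbb, hc0, hGmat]
    simp only [Matrix.sub_mulVec, dotProduct_sub]
    ring
  rw [show μ - V⁻¹.mulVec U = m by rw [hmdef, hwdef]]
  calc (2 * π) ^ (-(d:ℝ)/2) * Ω.det ^ (-(1:ℝ)/2) * rexp c0 *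
        ((2*π) ^ ((d:ℝ)/2) * A.det ^ (-(1:ℝ)/2) * rexp ((1/2) * (b ⬝ᵥ A⁻¹ *ᵥ b)))
      = ((2 * π) ^ (-(d:ℝ)/2) * (2*π) ^ ((d:ℝ)/2)) *
        (Ω.det ^ (-(1:ℝ)/2) * A.det ^ (-(1:ℝ)/2)) *
        (rexp c0 * rexp ((1/2) * (b ⬝ᵥ A⁻¹ *ᵥ b))) := by ring
    _ = (1 + V * Ω).det ^ (-(1:ℝ)/2) *
        Real.exp (-(1 / 2) * (m ⬝ᵥ ((1 + V * Ω)⁻¹ * V) *ᵥ m)) *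
        Real.exp ((1 / 2) * (U ⬝ᵥ V⁻¹ *ᵥ U)) := by
      rw [← Real.rpow_add (by positivity : (0:ℝ) < 2*π), neg_div, neg_add_cancel,
        Real.rpow_zero, one_mul, hdet, ← Real.exp_add, hexp, Real.exp_add, mul_assoc]
end
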